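/- arXiv:2010.14086 — 2 statements merged into one kernel-verified Lean document; each statement's English description precedes it below -/
import Mathlib

section
/- Let A be a Banach algebra such that A***·A** ⊆ A*, where the module actions are the canonical dual module actions arising from the first Arens product on A**. Then the weak left topological center Z̃₁ˡ(A**) equals all of A**. -/
open NormedSpace ContinuousLinearMap

namespace NormedSpace

/-- The topological dual of a normed space `E` (the old Mathlib `NormedSpace.Dual`,
removed from Mathlib). -/
abbrev Dual (𝕜 : Type*) [NontriviallyNormedField 𝕜] (E : Type*) [SeminormedAddCommGroup E]
    [NormedSpace 𝕜 E] : Type _ :=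
  E →L[𝕜] 𝕜

end NormedSpace

noncomputable section

section Core

variable (X Y Z : Type*)
  [NormedAddCommGroup X] [NormedSpace ℝ X]
  [NormedAddCommGroup Y] [NormedSpace ℝ Y]
  [NormedAddCommGroup Z] [NormedSpace ℝ Z]

/-- The dual (adjoint) map of a continuous linear map. -/
def dualMapCLM (T : X →L[ℝ] Y) : Dual ℝ Y →L[ℝ] Dual ℝ X :=
  (ContinuousLinearMap.compSL X Y ℝ (RingHom.id ℝ) (RingHom.id ℝ)).flip T

variable {X Y Z}

/-- The adjoint of a continuous bilinear map `m : X × Y → Z`, as a bilinear map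
`Z* × X → Y*`, `⟨adjBil m z' x, y⟩ = ⟨z', m x y⟩`. -/
def adjBil (m : X →L[ℝ] Y →L[ℝ] Z) : Dual ℝ Z →L[ℝ] X →L[ℝ] Dual ℝ Y :=
  ((ContinuousLinearMap.compSL X (Y →L[ℝ] Z) (Dual ℝ Y) (RingHom.id ℝ) (RingHom.id ℝ)).flip m).comp
    (ContinuousLinearMap.compSL Y Z ℝ (RingHom.id ℝ) (RingHom.id ℝ))

/-- The first Arens extension of a continuous bilinear map `X × Y → Z`
to the biduals, `X** × Y** → Z**`. -/
def arensExt (m : X →L[ℝ] Y →L[ℝ] Z) :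
    Dual ℝ (Dual ℝ X) →L[ℝ] Dual ℝ (Dual ℝ Y) →L[ℝ] Dual ℝ (Dual ℝ Z) :=
  adjBil (adjBil (adjBil m))

variable (E : Type*) [NormedAddCommGroup E] [NormedSpace ℝ E]

/-- The weak-* topology on the bidual `E**`, i.e. the topology of pointwise
convergence on `E*`. -/
def weakStarTop : TopologicalSpace (Dual ℝ (Dual ℝ E)) :=
  ⨅ f : Dual ℝ E, TopologicalSpace.induced (fun F => F f) inferInstance

/-- The weak topology on the bidual `E**`, i.e. the topology of pointwise
convergence on `E***`. -/
def weakTop : TopologicalSpace (Dual ℝ (Dual ℝ E)) :=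
  ⨅ Φ : Dual ℝ (Dual ℝ (Dual ℝ E)), TopologicalSpace.induced (fun F => Φ F) inferInstance

end Core

section Algebra

variable (A : Type*) [NonUnitalNormedRing A] [NormedSpace ℝ A]
  [IsScalarTower ℝ A A] [SMulCommClass ℝ A A]

/-- The first Arens product on the bidual of a Banach algebra. -/
def arens1 : Dual ℝ (Dual ℝ A) →L[ℝ] Dual ℝ (Dual ℝ A) →L[ℝ] Dual ℝ (Dual ℝ A) :=
  arensExt (ContinuousLinearMap.mul ℝ A)

/-- The second Arens product on the bidual of a Banach algebra. -/
def arens2 (F G : Dual ℝ (Dual ℝ A)) : Dual ℝ (Dual ℝ A) :=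
  arensExt ((ContinuousLinearMap.mul ℝ A).flip) G F

/-- The weak left topological center of `A**`: those `F` such that
`G ↦ F □ G` is weak-*-to-weak continuous. -/
def weakLeftCenter : Set (Dual ℝ (Dual ℝ A)) :=
  { F | ∀ Φ : Dual ℝ (Dual ℝ (Dual ℝ A)),
      @Continuous _ _ (weakStarTop A) _ fun G => Φ (arens1 A F G) }

/-- The left topological center of `A**`: those `F` such that
`G ↦ F □ G` is weak-*-to-weak-* continuous. -/
def leftCenter : Set (Dual ℝ (Dual ℝ A)) :=
  { F | ∀ f : Dual ℝ A,
      @Continuous _ _ (weakStarTop A) _ fun G => arens1 A F G f }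

end Algebra


open scoped Topology

theorem continuous_weakStarTop_apply (E : Type*) [NormedAddCommGroup E] [NormedSpace ℝ E]
    (f : Dual ℝ E) : Continuous[weakStarTop E, _] fun G : Dual ℝ (Dual ℝ E) => G f :=
  continuous_iInf_dom (i := f) continuous_induced_dom

theorem continuous_weakStarTop_of_mem_range {E : Type*} [NormedAddCommGroup E] [NormedSpace ℝ E]
    {ψ : Dual ℝ (Dual ℝ (Dual ℝ E))}
    (hψ : ψ ∈ Set.range (inclusionInDoubleDual ℝ (Dual ℝ E))) :
    Continuous[weakStarTop E, _] ψ := by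
  obtain ⟨f, rfl⟩ := hψ
  exact continuous_weakStarTop_apply E f

theorem stmt2_general (A : Type*) [NonUnitalNormedRing A] [NormedSpace ℝ A]
    [IsScalarTower ℝ A A] [SMulCommClass ℝ A A]
    (h : ∀ (φ : Dual ℝ (Dual ℝ (Dual ℝ A))) (F : Dual ℝ (Dual ℝ A)),
      φ.comp (arens1 A F) ∈ Set.range (inclusionInDoubleDual ℝ (Dual ℝ A))) :
    weakLeftCenter A = Set.univ :=
  Set.eq_univ_of_forall fun F Φ => continuous_weakStarTop_of_mem_range (h Φ F)

/-- If `A*** ⋅ A** ⊆ A*` (dual module actions from the first Arens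
product), then the weak left topological center of `A**` is all of `A**`. -/
theorem stmt2 (A : Type*) [NonUnitalNormedRing A] [NormedSpace ℝ A]
    [IsScalarTower ℝ A A] [SMulCommClass ℝ A A] [CompleteSpace A]
    (h : ∀ (φ : Dual ℝ (Dual ℝ (Dual ℝ A))) (F : Dual ℝ (Dual ℝ A)),
      φ.comp (arens1 A F) ∈ Set.range (inclusionInDoubleDual ℝ (Dual ℝ A))) :
    weakLeftCenter A = Set.univ :=
  stmt2_general A h

end
end

section
/- Let n ≥ 2 be even and B a left Banach A-module such that A⁽ⁿ⁻²⁾·B⁽ⁿ⁾ ⊆ B⁽ⁿ⁻²⁾ (under canonical identifications). Then A⁽ⁿ⁻²⁾ is contained in the weak left topological center Z̃ˡ_{B⁽ⁿ⁾}(A⁽ⁿ⁾). In the base case n = 2: if A·B** ⊆ B (the extended left module action of A on B** takes values in the canonical image of B), then for every a ∈ A the map b'' ↦ a·b'' from B** to B** is weak*-to-weak continuous. -/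
open NormedSpace ContinuousLinearMap

noncomputable section

/-! If `a ⋅ b''` always lies in `B`, then for `Φ ∈ B***` we have
`Φ (a ⋅ b'') = ⟨Φ|_B, a ⋅ b''⟩ = ⟨b'', Φ|_B ⋅ a⟩`, so `b'' ↦ Φ (a ⋅ b'')` is evaluation of `b''` at
a fixed element of `B*`, which is weak-* continuous. -/

section ArensExtension

variable {X Y Z : Type*}
  [NormedAddCommGroup X] [NormedSpace ℝ X]
  [NormedAddCommGroup Y] [NormedSpace ℝ Y]
  [NormedAddCommGroup Z] [NormedSpace ℝ Z]

theorem continuous_apply_weakStarTop {E : Type*} [NormedAddCommGroup E] [NormedSpace ℝ E]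
    (f : Dual ℝ E) : @Continuous _ _ (weakStarTop E) _ fun F : Dual ℝ (Dual ℝ E) => F f :=
  continuous_iInf_dom (i := f) continuous_induced_dom

theorem arensExt_inclusionInDoubleDual_apply (m : X →L[ℝ] Y →L[ℝ] Z) (x : X)
    (G : Dual ℝ (Dual ℝ Y)) (z' : Dual ℝ Z) :
    arensExt m (inclusionInDoubleDual ℝ X x) G z' = G (adjBil m z' x) :=
  rfl

theorem apply_arensExt_inclusionInDoubleDual_of_mem_range (m : X →L[ℝ] Y →L[ℝ] Z) (x : X)
    (G : Dual ℝ (Dual ℝ Y)) (Φ : Dual ℝ (Dual ℝ (Dual ℝ Z)))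
    (hG : arensExt m (inclusionInDoubleDual ℝ X x) G ∈ Set.range (inclusionInDoubleDual ℝ Z)) :
    Φ (arensExt m (inclusionInDoubleDual ℝ X x) G) =
      G (adjBil m (Φ.comp (inclusionInDoubleDual ℝ Z)) x) := by
  obtain ⟨z, hz⟩ := hG
  rw [← arensExt_inclusionInDoubleDual_apply, ← hz]
  rfl

theorem continuous_apply_arensExt_inclusionInDoubleDual_of_range_subset
    (m : X →L[ℝ] Y →L[ℝ] Z) (x : X)
    (h : ∀ G, arensExt m (inclusionInDoubleDual ℝ X x) G ∈ Set.range (inclusionInDoubleDual ℝ Z))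
    (Φ : Dual ℝ (Dual ℝ (Dual ℝ Z))) :
    @Continuous _ _ (weakStarTop Y) _ fun G => Φ (arensExt m (inclusionInDoubleDual ℝ X x) G) := by
  simp only [apply_arensExt_inclusionInDoubleDual_of_mem_range m x _ Φ (h _)]
  exact continuous_apply_weakStarTop _

end ArensExtension

theorem stmt9_general (A : Type*) [NonUnitalNormedRing A] [NormedSpace ℝ A]
    (B : Type*) [NormedAddCommGroup B] [NormedSpace ℝ B]
    (l : A →L[ℝ] B →L[ℝ] B)
    (h : ∀ (a : A) (b'' : Dual ℝ (Dual ℝ B)),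
      arensExt l (inclusionInDoubleDual ℝ A a) b'' ∈ Set.range (inclusionInDoubleDual ℝ B)) :
    ∀ (a : A) (Φ : Dual ℝ (Dual ℝ (Dual ℝ B))),
      @Continuous _ _ (weakStarTop B) _
        fun b'' => Φ (arensExt l (inclusionInDoubleDual ℝ A a) b'') :=
  fun a => continuous_apply_arensExt_inclusionInDoubleDual_of_range_subset l a (h a)

/-- base case n = 2: if `B` is a left Banach `A`-module with
`A ⋅ B** ⊆ B` (the extended left action of `A` on `B**` takes values in the
canonical image of `B`), then for every `a ∈ A` the map `b'' ↦ a ⋅ b''` is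
weak-*-to-weak continuous on `B**`. -/
theorem stmt9 (A : Type*) [NonUnitalNormedRing A] [NormedSpace ℝ A]
    [IsScalarTower ℝ A A] [SMulCommClass ℝ A A] [CompleteSpace A]
    (B : Type*) [NormedAddCommGroup B] [NormedSpace ℝ B] [CompleteSpace B]
    (l : A →L[ℝ] B →L[ℝ] B)
    (hl : ∀ (a b : A) (x : B), l (a * b) x = l a (l b x))
    (h : ∀ (a : A) (b'' : Dual ℝ (Dual ℝ B)),
      arensExt l (inclusionInDoubleDual ℝ A a) b'' ∈ Set.range (inclusionInDoubleDual ℝ B)) :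
    ∀ (a : A) (Φ : Dual ℝ (Dual ℝ (Dual ℝ B))),
      @Continuous _ _ (weakStarTop B) _
        fun b'' => Φ (arensExt l (inclusionInDoubleDual ℝ A a) b'') :=
  stmt9_general A B l h

end
end
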